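/- arXiv:2605.23916 — 2 statements merged into one kernel-verified Lean document; each statement's English description precedes it below -/
import Mathlib

section
/- (Prisoner's Dilemma equilibrium) With payoff π_i(q) = r·σ_i(q) − c(q_i), c(0) = 0, κ = f(q̄)/f(0) > 1, and r > 0: the all-optimize profile (q̄,...,q̄) is a Nash equilibrium (no unilateral deviation to 0 is profitable) if and only if c(q̄) ≤ r(κ−1)(N−1)/[N(κ(N−1)+1)]. -/
/-- Prisoner's Dilemma equilibrium: with payoff `π_i = r·σ_i − c(q_i)`, `c(0) = 0`,
`κ > 1`, `r > 0`, the all-optimize profile is a Nash equilibrium (unilateral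
deviation from `q̄` to `0`, which changes `σ_i` from `1/N` to `1/(κ(N−1)+1)`,
is unprofitable) if and only if `c(q̄) ≤ r(κ−1)(N−1)/[N(κ(N−1)+1)]`. -/
theorem all_optimize_nash_iff_threshold
    (N : ℕ) (hN : 2 ≤ N) (r κ cbar : ℝ)
    (hr : 0 < r) (hκ : 1 < κ) (hc : 0 ≤ cbar) :
    (r * (1 / (κ * ((N : ℝ) - 1) + 1)) - 0 ≤ r * (1 / (N : ℝ)) - cbar) ↔
      cbar ≤ r * (κ - 1) * ((N : ℝ) - 1) / ((N : ℝ) * (κ * ((N : ℝ) - 1) + 1)) := by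
  have hN1 : (2 : ℝ) ≤ (N : ℝ) := by exact_mod_cast hN
  have hNpos : (0 : ℝ) < N := by linarith
  have hD : (0 : ℝ) < κ * ((N : ℝ) - 1) + 1 := by nlinarith
  have hkey : r * (1 / (N : ℝ)) - r * (1 / (κ * ((N : ℝ) - 1) + 1))
      = r * (κ - 1) * ((N : ℝ) - 1) / ((N : ℝ) * (κ * ((N : ℝ) - 1) + 1)) := by
    field_simp
    ring
  rw [sub_zero, ← hkey]
  constructor <;> intro h <;> linarith
end

section
/- In the two-provider game (N = 2) with κ > 1, if c(q̄) < r(κ−1)/(2(κ+1)) then both (q̄,q̄) is a Nash equilibrium and each player's equilibrium payoff r/2 − c(q̄) is strictly less than the payoff r/2 each would get at (0,0) — i.e., the game is a prisoner's dilemma. -/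
/-- Two-provider prisoner's dilemma: with `κ > 1` and
`c(q̄) < r(κ−1)/(2(κ+1))`, the profile `(q̄,q̄)` is a Nash equilibrium
(deviation payoff `r/(κ+1)` does not exceed `r/2 − c(q̄)`), and each player's
equilibrium payoff `r/2 − c(q̄)` is strictly less than `r/2`, the payoff at
`(0,0)`. -/
theorem two_provider_prisoners_dilemma
    (r κ cbar : ℝ) (hr : 0 < r) (hκ : 1 < κ) (hc : 0 < cbar)
    (hthr : cbar < r * (κ - 1) / (2 * (κ + 1))) :
    (r / (κ + 1) - 0 ≤ r / 2 - cbar) ∧ (r / 2 - cbar < r / 2 - 0) := by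
  have h2 : (0:ℝ) < 2 * (κ + 1) := by linarith
  rw [lt_div_iff₀ h2] at hthr
  have hk1 : (0:ℝ) < κ + 1 := by linarith
  constructor
  · rw [sub_zero]
    rw [div_le_iff₀ hk1]
    have : r / 2 = r * (κ + 1) / (2 * (κ + 1)) := by field_simp
    nlinarith [mul_pos hk1 hk1]
  · linarith
end
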